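/- Let A, B > 0, C ∈ ℝ, p > 2, and define f : ℝ → ℝ by f(t) = (A/2)t² − (B/(p+1))t^{p+1} − C·t³ for t ≥ 0. Then f attains a maximum on [0,∞) at some t̄ > 0, and t̄ is the unique positive solution of the equation A = B·t^{p−1} + 3C·t. -/

import Mathlib

/-!
Write `N(t) = A - B t^(p-1) - 3 C t`, so that `f'(t) = t N(t)`. For `t > 0`,
`N(t) / t = A / t - B t^(p-2) - 3 C` is strictly decreasing because `p ≥ 2`, whatever
the sign of `C`; hence `N` has at most one positive zero `t̄`, and it has one since
`N(0) = A > 0` while `N(t) → -∞`. Then `f'` is positive on `(0, t̄)` and negative on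
`(t̄, ∞)`, so `t̄` maximises `f`.
-/

open Real Set Filter

lemma isMaxOn_Ici_of_hasDerivAt {F F' : ℝ → ℝ} {a c : ℝ} (hac : a ≤ c)
    (hF : ContinuousOn F (Ici a)) (hF' : ∀ x ∈ Ioi a, HasDerivAt F (F' x) x)
    (hpos : ∀ x ∈ Ioo a c, 0 ≤ F' x) (hneg : ∀ x ∈ Ioi c, F' x ≤ 0) :
    IsMaxOn F (Ici a) c := by
  refine isMaxOn_iff.mpr fun t ht => ?_
  rcases le_total t c with htc | hct
  · refine monotoneOn_of_hasDerivWithinAt_nonneg (f' := F') (convex_Icc a c)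
      (hF.mono Icc_subset_Ici_self) (fun x hx => ?_) (fun x hx => ?_)
      ⟨ht, htc⟩ ⟨hac, le_rfl⟩ htc
    · rw [interior_Icc] at hx ⊢
      exact (hF' x hx.1).hasDerivWithinAt
    · rw [interior_Icc] at hx
      exact hpos x hx
  · refine antitoneOn_of_hasDerivWithinAt_nonpos (f' := F') (convex_Ici c)
      (hF.mono (Ici_subset_Ici.2 hac)) (fun x hx => ?_) (fun x hx => ?_) self_mem_Ici hct hct
    · rw [interior_Ici] at hx ⊢
      exact (hF' x (hac.trans_lt hx)).hasDerivWithinAt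
    · rw [interior_Ici] at hx
      exact hneg x hx

lemma strictAntiOn_div_sub_mul_rpow {A B q : ℝ} (hA : 0 < A) (hB : 0 ≤ B) (hq : 0 ≤ q)
    (c : ℝ) :
    StrictAntiOn (fun t => A / t - B * t ^ q - c) (Ioi 0) := by
  intro s hs t _ hst
  have hdiv : A / t < A / s := div_lt_div_of_pos_left hA hs hst
  have hpow : B * s ^ q ≤ B * t ^ q :=
    mul_le_mul_of_nonneg_left (rpow_le_rpow (le_of_lt hs) hst.le hq) hB
  simp only
  linarith

lemma rpow_sub_one_eq_rpow_sub_two_mul {t : ℝ} (ht : 0 < t) (p : ℝ) :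
    t ^ (p - 1) = t ^ (p - 2) * t := by
  rw [← rpow_add_one ht.ne']
  ring_nf

noncomputable def nehariDefect (A B C p t : ℝ) : ℝ := A - B * t ^ (p - 1) - 3 * C * t

noncomputable def fiberingMap (A B C p t : ℝ) : ℝ :=
  A / 2 * t ^ 2 - B / (p + 1) * t ^ (p + 1) - C * t ^ 3

section NehariDefect

variable {A B C p : ℝ}

lemma nehariDefect_div_eq {t : ℝ} (ht : 0 < t) :
    nehariDefect A B C p t / t = A / t - B * t ^ (p - 2) - 3 * C := by
  rw [nehariDefect, rpow_sub_one_eq_rpow_sub_two_mul ht]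
  field_simp

lemma strictAntiOn_nehariDefect_div (hA : 0 < A) (hB : 0 ≤ B) (hp : 2 ≤ p) :
    StrictAntiOn (fun t => nehariDefect A B C p t / t) (Ioi 0) :=
  (strictAntiOn_div_sub_mul_rpow hA hB (by linarith) _).congr fun _ ht =>
    (nehariDefect_div_eq ht).symm

lemma nehariDefect_zero (hp : 1 < p) : nehariDefect A B C p 0 = A := by
  simp [nehariDefect, zero_rpow (by linarith : p - 1 ≠ 0)]

lemma continuous_nehariDefect (hp : 1 ≤ p) : Continuous (nehariDefect A B C p) := by
  unfold nehariDefect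
  have := continuous_rpow_const (by linarith : (0 : ℝ) ≤ p - 1)
  fun_prop

lemma tendsto_nehariDefect_atTop (hB : 0 < B) (hp : 2 < p) :
    Tendsto (nehariDefect A B C p) atTop atBot := by
  have hgrowth : Tendsto (fun t : ℝ => t * (B * t ^ (p - 2) + 3 * C)) atTop atTop :=
    tendsto_id.atTop_mul_atTop₀ <| tendsto_atTop_add_const_right _ _ <|
      (tendsto_rpow_atTop (by linarith)).const_mul_atTop hB
  refine (tendsto_atBot_add_const_left _ A (tendsto_neg_atTop_atBot.comp hgrowth)).congr' ?_
  filter_upwards [eventually_gt_atTop 0] with t ht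
  simp only [Function.comp, nehariDefect, rpow_sub_one_eq_rpow_sub_two_mul ht]
  ring

lemma exists_pos_nehariDefect_eq_zero (hA : 0 < A) (hB : 0 < B) (hp : 2 < p) :
    ∃ tb, 0 < tb ∧ nehariDefect A B C p tb = 0 := by
  obtain ⟨M, hM, hM0⟩ := (((tendsto_nehariDefect_atTop (A := A) (C := C) hB hp).eventually
    (eventually_lt_atBot 0)).and (eventually_ge_atTop 0)).exists
  have hcont : Continuous (nehariDefect A B C p) := continuous_nehariDefect (by linarith)
  have hzero_at_zero : nehariDefect A B C p 0 = A := nehariDefect_zero (by linarith)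
  have hsign_change : (0 : ℝ) ∈ Icc (nehariDefect A B C p M) (nehariDefect A B C p 0) :=
    ⟨hM.le, by rw [hzero_at_zero]; exact hA.le⟩
  obtain ⟨tb, htb, hzero⟩ := intermediate_value_Icc' hM0 hcont.continuousOn hsign_change
  refine ⟨tb, htb.1.lt_of_ne ?_, hzero⟩
  rintro rfl
  rw [hzero_at_zero] at hzero
  exact hA.ne' hzero

section Zero

variable {tb : ℝ} (hA : 0 < A) (hB : 0 ≤ B) (hp : 2 ≤ p) (htb : 0 < tb)
  (hzero : nehariDefect A B C p tb = 0)
include hA hB hp htb hzero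

lemma nehariDefect_pos_of_lt {t : ℝ} (ht : 0 < t) (htt : t < tb) :
    0 < nehariDefect A B C p t := by
  have : nehariDefect A B C p tb / tb < nehariDefect A B C p t / t :=
    strictAntiOn_nehariDefect_div hA hB hp ht htb htt
  rw [hzero, zero_div] at this
  exact (div_pos_iff_of_pos_right ht).mp this

lemma nehariDefect_neg_of_gt {t : ℝ} (htt : tb < t) : nehariDefect A B C p t < 0 := by
  have ht := htb.trans htt
  have : nehariDefect A B C p t / t < nehariDefect A B C p tb / tb :=
    strictAntiOn_nehariDefect_div hA hB hp htb ht htt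
  rw [hzero, zero_div] at this
  simpa [div_mul_cancel₀ _ ht.ne'] using mul_neg_of_neg_of_pos this ht

lemma nehariDefect_eq_zero_iff {t : ℝ} (ht : 0 < t) : nehariDefect A B C p t = 0 ↔ t = tb := by
  rw [← (strictAntiOn_nehariDefect_div (C := C) hA hB hp).injOn.eq_iff ht htb]
  simp [hzero, ht.ne']

end Zero

lemma continuous_fiberingMap (hp : -1 ≤ p) : Continuous (fiberingMap A B C p) := by
  unfold fiberingMap
  have := continuous_rpow_const (by linarith : (0 : ℝ) ≤ p + 1)
  fun_prop

lemma hasDerivAt_fiberingMap (hp : p + 1 ≠ 0) {t : ℝ} (ht : 0 < t) :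
    HasDerivAt (fiberingMap A B C p) (t * nehariDefect A B C p t) t := by
  have hrpow := (hasDerivAt_rpow_const (p := p + 1) (Or.inl ht.ne')).const_mul (B / (p + 1))
  refine ((((hasDerivAt_pow 2 t).const_mul (A / 2)).sub hrpow).sub
    ((hasDerivAt_pow 3 t).const_mul C)).congr_deriv ?_
  have hpow : t ^ (p + 1 - 1) = t * t ^ (p - 1) := by
    rw [mul_comm, ← rpow_add_one ht.ne']
    ring_nf
  unfold nehariDefect
  rw [hpow]
  field_simp
  ring

end NehariDefect

theorem stmt0 (A B C p : ℝ) (hA : 0 < A) (hB : 0 < B) (hp : 2 < p)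
    (f : ℝ → ℝ)
    (hf : ∀ t : ℝ, 0 ≤ t → f t = A / 2 * t ^ 2 - B / (p + 1) * t ^ (p + 1) - C * t ^ 3) :
    ∃ tb : ℝ, 0 < tb ∧ (∀ t : ℝ, 0 ≤ t → f t ≤ f tb) ∧
      (∀ t : ℝ, 0 < t → (A = B * t ^ (p - 1) + 3 * C * t ↔ t = tb)) := by
  obtain ⟨tb, htb, hzero⟩ := exists_pos_nehariDefect_eq_zero (C := C) hA hB hp
  have hmax : IsMaxOn (fiberingMap A B C p) (Ici 0) tb :=
    isMaxOn_Ici_of_hasDerivAt htb.le (continuous_fiberingMap (by linarith)).continuousOn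
      (fun t ht => hasDerivAt_fiberingMap (by linarith) ht)
      (fun t ht => mul_nonneg ht.1.le
        (nehariDefect_pos_of_lt hA hB.le hp.le htb hzero ht.1 ht.2).le)
      (fun t ht => mul_nonpos_of_nonneg_of_nonpos (htb.trans ht).le
        (nehariDefect_neg_of_gt hA hB.le hp.le htb hzero ht).le)
  refine ⟨tb, htb, fun t ht => ?_, fun t ht => ?_⟩
  · rw [hf t ht, hf tb htb.le]
    exact isMaxOn_iff.mp hmax t ht
  · rw [← nehariDefect_eq_zero_iff hA hB.le hp.le htb hzero ht]
    unfold nehariDefect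
    constructor <;> intro h <;> linarith
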